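/- arXiv:1804.06200 — 2 statements merged into one kernel-verified Lean document; each statement's English description precedes it below -/
import Mathlib

section
/- Let (τ_k)_{k≥0} be real polynomials with deg τ_k ≤ k, and let (a_n)_{n≥0} be real numbers with a_0 = 1. For n ≥ 1, k ≥ 0, define σ_k^{[n]} = Δ τ_{k+n+1} - Σ_{ℓ=0}^{n-1} a_ℓ Δ^ℓ D τ_{k+n+1}. Then σ_k^{[n]} has degree at most k+n and its coefficients satisfy σ_k^{[n]}[j] = Σ_{m=j}^{k+n} binomial(m+1, j) ( 1 - (m+1-j) Σ_{ℓ=0}^{n-1} a_ℓ ℓ! S(m-j, ℓ) ) τ_{k+n+1}[m+1] for j = 0, ..., k+n. -/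
open Polynomial Finset

/-- Forward difference operator on functions ℝ → ℝ. -/
noncomputable def fdiff (f : ℝ → ℝ) : ℝ → ℝ := fun x => f (x + 1) - f x

/-- Forward difference operator on real polynomials: (Δπ)(x) = π(x+1) - π(x). -/
noncomputable def polyDelta (p : Polynomial ℝ) : Polynomial ℝ := p.comp (X + 1) - p

/-- Unsigned Stirling numbers of the first kind. -/
def stirling1 : ℕ → ℕ → ℕ
  | 0, 0 => 1
  | 0, _ + 1 => 0
  | _ + 1, 0 => 0
  | n + 1, m + 1 => n * stirling1 n (m + 1) + stirling1 n m

/-- Stirling numbers of the second kind, via the explicit formula. -/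
noncomputable def stirling2 (n m : ℕ) : ℝ :=
  (1 / (m.factorial : ℝ)) *
    ∑ j ∈ Finset.range (m + 1), (m.choose j : ℝ) * (-1) ^ (m - j) * (j : ℝ) ^ n

/-- Gregory coefficients. -/
noncomputable def gregory (n : ℕ) : ℝ :=
  (1 / (n.factorial : ℝ)) *
    ∑ j ∈ Finset.range (n + 1), (stirling1 n j : ℝ) * (-1) ^ (n - j) / ((j : ℝ) + 1)

noncomputable def Tshift : Module.End ℝ (Polynomial ℝ) := (aeval (X + 1 : Polynomial ℝ)).toLinearMap

lemma Tshift_apply (p : Polynomial ℝ) : Tshift p = p.comp (X + 1) := by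
  simp [Tshift, aeval_def, eval₂_eq_eval_map, comp.eq_1]

lemma polyDelta_apply' (p : Polynomial ℝ) : polyDelta p = (Tshift - 1) p := by
  simp [polyDelta, Tshift_apply]

lemma Tshift_pow_apply (i : ℕ) (p : Polynomial ℝ) : (Tshift^i) p = p.comp (X + C (i:ℝ)) := by
  induction i with
  | zero => simp
  | succ i ih =>
    rw [pow_succ', Module.End.mul_apply, Tshift_apply, ih, comp_assoc]
    congr 1
    push_cast
    simp [add_comp]
    ring

lemma polyDelta_iter (ℓ : ℕ) (p : Polynomial ℝ) :
    polyDelta^[ℓ] p = ((Tshift - 1)^ℓ) p := by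
  rw [Module.End.pow_apply]
  induction ℓ with
  | zero => simp
  | succ i ih =>
    rw [Function.iterate_succ_apply', Function.iterate_succ_apply', ih, polyDelta_apply']

lemma iter_expand (ℓ : ℕ) (p : Polynomial ℝ) :
    polyDelta^[ℓ] p = ∑ i ∈ range (ℓ+1),
      ((-1:ℝ)^(ℓ-i) * (ℓ.choose i : ℝ)) • p.comp (X + C (i:ℝ)) := by
  rw [polyDelta_iter, sub_eq_add_neg, (Commute.neg_one_right Tshift).add_pow, LinearMap.sum_apply]
  refine Finset.sum_congr rfl fun i hi => ?_
  have h1 : ((-1 : Module.End ℝ (Polynomial ℝ)))^(ℓ-i) = algebraMap ℝ _ ((-1:ℝ)^(ℓ-i)) := by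
    rw [map_pow, map_neg, map_one]
  have h2 : ((ℓ.choose i : ℕ) : Module.End ℝ (Polynomial ℝ)) = algebraMap ℝ _ (ℓ.choose i : ℝ) := by
    push_cast; simp
  rw [h1, h2, Module.End.mul_apply, Module.End.mul_apply, Module.algebraMap_end_apply,
    Module.algebraMap_end_apply, map_smul, map_smul, Tshift_pow_apply, smul_smul]

lemma coeff_comp_X_add_C (p : Polynomial ℝ) (r : ℝ) (j N : ℕ) (hN : p.natDegree < N) :
    (p.comp (X + C r)).coeff j
      = ∑ m ∈ range N, (m.choose j : ℝ) * r^(m-j) * p.coeff m := by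
  conv_lhs => rw [p.as_sum_range' N hN]
  rw [comp, eval₂_finset_sum, finset_sum_coeff]
  refine Finset.sum_congr rfl fun m hm => ?_
  rw [eval₂_monomial, coeff_C_mul, coeff_X_add_C_pow]
  ring

lemma factorial_stirling2 (r ℓ : ℕ) :
    (ℓ.factorial : ℝ) * stirling2 r ℓ
      = ∑ i ∈ range (ℓ+1), (ℓ.choose i : ℝ) * (-1)^(ℓ-i) * (i:ℝ)^r := by
  rw [stirling2, ← mul_assoc, mul_one_div, div_self (by positivity), one_mul]

lemma coeff_iter (ℓ : ℕ) (p : Polynomial ℝ) (j N : ℕ) (hN : p.natDegree < N) :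
    (polyDelta^[ℓ] p).coeff j
      = ∑ m ∈ range N, (m.choose j : ℝ) * ((ℓ.factorial:ℝ) * stirling2 (m-j) ℓ) * p.coeff m := by
  rw [iter_expand, finset_sum_coeff]
  simp only [coeff_smul, smul_eq_mul, coeff_comp_X_add_C p _ j N hN, Finset.mul_sum]
  rw [Finset.sum_comm]
  refine Finset.sum_congr rfl fun m hm => ?_
  rw [factorial_stirling2, Finset.mul_sum, Finset.sum_mul]
  exact Finset.sum_congr rfl fun i _ => by ring

lemma stirling2_one (r : ℕ) : stirling2 r 1 = if r = 0 then 0 else 1 := by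
  rcases r with _ | r <;> simp [stirling2, Finset.sum_range_succ]


theorem sigma_kn_degree_coeff (τ : ℕ → Polynomial ℝ) (hτ : ∀ k, (τ k).natDegree ≤ k)
    (a : ℕ → ℝ) (ha0 : a 0 = 1) (n k : ℕ) (hn : 1 ≤ n) :
    (polyDelta (τ (k + n + 1))
      - ∑ ℓ ∈ Finset.range n, a ℓ • polyDelta^[ℓ] (Polynomial.derivative (τ (k + n + 1)))).natDegree
        ≤ k + n ∧
    ∀ j : ℕ, j ≤ k + n →
      (polyDelta (τ (k + n + 1))
        - ∑ ℓ ∈ Finset.range n, a ℓ • polyDelta^[ℓ] (Polynomial.derivative (τ (k + n + 1)))).coeff j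
        = ∑ m ∈ Finset.Icc j (k + n),
            ((m + 1).choose j : ℝ)
              * (1 - ((m + 1 - j : ℕ) : ℝ)
                  * ∑ ℓ ∈ Finset.range n, a ℓ * (ℓ.factorial : ℝ) * stirling2 (m - j) ℓ)
              * (τ (k + n + 1)).coeff (m + 1) := by
  set P := τ (k + n + 1) with hP
  set q := Polynomial.derivative P with hq
  have hτ' : P.natDegree ≤ k + n + 1 := hP ▸ hτ (k + n + 1)
  have hPdeg : P.natDegree < k + n + 2 := Nat.lt_succ_of_le hτ'
  have hqdeg : q.natDegree < k + n + 1 := by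
    have h := Polynomial.natDegree_derivative_le P
    rw [← hq] at h
    omega
  have key : ∀ j : ℕ,
      (polyDelta P - ∑ ℓ ∈ Finset.range n, a ℓ • polyDelta^[ℓ] q).coeff j
        = ∑ m ∈ Finset.Icc j (k + n),
            ((m + 1).choose j : ℝ)
              * (1 - ((m + 1 - j : ℕ) : ℝ)
                  * ∑ ℓ ∈ Finset.range n, a ℓ * (ℓ.factorial : ℝ) * stirling2 (m - j) ℓ)
              * P.coeff (m + 1) := by
    intro j
    have hΔ : polyDelta P = polyDelta^[1] P := by simp
    rw [coeff_sub, finset_sum_coeff, hΔ, coeff_iter 1 P j (k+n+2) hPdeg]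
    simp only [coeff_smul, smul_eq_mul]
    have hterm : ∀ ℓ, (polyDelta^[ℓ] q).coeff j
        = ∑ m ∈ range (k+n+1),
            ((m+1).choose j : ℝ) * ((m+1-j : ℕ):ℝ) * ((ℓ.factorial:ℝ) * stirling2 (m-j) ℓ)
              * P.coeff (m+1) := by
      intro ℓ
      rw [coeff_iter ℓ q j (k+n+1) hqdeg]
      refine Finset.sum_congr rfl fun m hm => ?_
      rw [hq, Polynomial.coeff_derivative]
      have hid : ((m.choose j : ℕ) : ℝ) * ((m:ℝ) + 1)
          = ((m+1).choose j : ℝ) * ((m+1-j : ℕ):ℝ) := by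
        have h2 := congrArg (Nat.cast (R := ℝ)) (Nat.choose_mul_succ_eq m j)
        push_cast [Nat.cast_mul] at h2
        convert h2 using 2 <;> push_cast <;> ring_nf
      calc (m.choose j : ℝ) * ((ℓ.factorial:ℝ) * stirling2 (m-j) ℓ) * (P.coeff (m+1) * ((m:ℝ)+1))
          = ((m.choose j : ℝ) * ((m:ℝ)+1)) * ((ℓ.factorial:ℝ) * stirling2 (m-j) ℓ)
              * P.coeff (m+1) := by ring
        _ = _ := by rw [hid]
    simp only [hterm]
    have hΔsum : ∑ m ∈ range (k+n+2),
        (m.choose j : ℝ) * ((Nat.factorial 1:ℝ) * stirling2 (m-j) 1) * P.coeff m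
        = ∑ m ∈ range (k+n+1),
            ((m+1).choose j : ℝ) * ((Nat.factorial 1:ℝ) * stirling2 (m+1-j) 1)
              * P.coeff (m+1) := by
      rw [Finset.sum_range_succ']
      have h0 : (Nat.choose 0 j : ℝ) * ((Nat.factorial 1:ℝ) * stirling2 (0-j) 1) * P.coeff 0 = 0 := by
        rcases Nat.eq_zero_or_pos j with h | h
        · subst h; simp [stirling2_one]
        · simp [Nat.choose_eq_zero_of_lt h]
      rw [h0, add_zero]
    rw [hΔsum]
    have hswap : ∑ ℓ ∈ range n, a ℓ *
        ∑ m ∈ range (k+n+1),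
            ((m+1).choose j : ℝ) * ((m+1-j : ℕ):ℝ) * ((ℓ.factorial:ℝ) * stirling2 (m-j) ℓ)
              * P.coeff (m+1)
        = ∑ m ∈ range (k+n+1), ∑ ℓ ∈ range n, a ℓ *
            (((m+1).choose j : ℝ) * ((m+1-j : ℕ):ℝ) * ((ℓ.factorial:ℝ) * stirling2 (m-j) ℓ)
              * P.coeff (m+1)) := by
      simp only [Finset.mul_sum]
      exact Finset.sum_comm
    rw [hswap, ← Finset.sum_sub_distrib]
    have hIcc : ∑ m ∈ Finset.Icc j (k + n),
            ((m + 1).choose j : ℝ)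
              * (1 - ((m + 1 - j : ℕ) : ℝ)
                  * ∑ ℓ ∈ Finset.range n, a ℓ * (ℓ.factorial : ℝ) * stirling2 (m - j) ℓ)
              * P.coeff (m + 1)
        = ∑ m ∈ Finset.Icc j (k + n),
            (((m+1).choose j : ℝ) * ((Nat.factorial 1:ℝ) * stirling2 (m+1-j) 1) * P.coeff (m+1)
              - ∑ ℓ ∈ range n, a ℓ *
                  (((m+1).choose j : ℝ) * ((m+1-j : ℕ):ℝ)
                    * ((ℓ.factorial:ℝ) * stirling2 (m-j) ℓ) * P.coeff (m+1))) := by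
      refine Finset.sum_congr rfl fun m hm => ?_
      rw [Finset.mem_Icc] at hm
      have h1 : m + 1 - j ≠ 0 := by omega
      rw [stirling2_one, if_neg h1, Nat.factorial_one]
      have hsum : ∑ ℓ ∈ range n, a ℓ *
          (((m+1).choose j : ℝ) * ((m+1-j : ℕ):ℝ)
            * ((ℓ.factorial:ℝ) * stirling2 (m-j) ℓ) * P.coeff (m+1))
          = (((m+1).choose j : ℝ) * ((m+1-j : ℕ):ℝ) * P.coeff (m+1))
              * ∑ ℓ ∈ range n, a ℓ * (ℓ.factorial:ℝ) * stirling2 (m-j) ℓ := by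
        rw [Finset.mul_sum]
        exact Finset.sum_congr rfl fun ℓ _ => by ring
      rw [hsum]
      ring
    rw [hIcc]
    refine (Finset.sum_subset ?_ ?_).symm
    · intro m hm
      rw [Finset.mem_Icc] at hm
      rw [Finset.mem_range]
      omega
    · intro m hm hnot
      rw [Finset.mem_range] at hm
      rw [Finset.mem_Icc] at hnot
      have h1 : m + 1 - j = 0 := by omega
      rw [h1, stirling2_one, if_pos rfl]
      push_cast [h1]
      simp
  constructor
  · rw [Polynomial.natDegree_le_iff_coeff_eq_zero]
    intro m hm
    rw [key m, Finset.Icc_eq_empty (by omega), Finset.sum_empty]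
  · intro j _
    exact key j
end

section
/- Let (τ_k)_{k≥0} be real polynomials with deg τ_k ≤ k, and let G_n be the Gregory coefficients. For n ≥ 1, k ≥ 0, the polynomial σ_k^{[n]} = Δ τ_{k+n+1} - Σ_{ℓ=0}^{n-1} G_ℓ Δ^ℓ D τ_{k+n+1} has degree at most k. -/
open Polynomial Finset

/-- binomial basis polynomial C(X, m) -/
noncomputable def bb (m : ℕ) : Polynomial ℝ :=
  (1 / (m.factorial : ℝ)) • descPochhammer ℝ m

noncomputable def ee (r : ℕ) : ℝ := (-1) ^ (r + 1) / r

/-- "derivative of bb" family -/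
noncomputable def FF (u : ℕ) : Polynomial ℝ := ∑ t ∈ Finset.range u, ee (u - t) • bb t

lemma ee_zero : ee 0 = 0 := by simp [ee]

lemma bb_zero : bb 0 = 1 := by simp [bb]

lemma natDegree_bb (m : ℕ) : (bb m).natDegree ≤ m := by
  refine le_trans (natDegree_smul_le _ _) ?_
  simp [descPochhammer_natDegree]

lemma polyDelta_bb_succ (m : ℕ) : polyDelta (bb (m + 1)) = bb m := by
  have h1 : (descPochhammer ℝ (m + 1)).comp (X + 1)
      = (X + 1) * descPochhammer ℝ m := by
    rw [descPochhammer_succ_left, mul_comp, X_comp, comp_assoc, sub_comp, X_comp, one_comp]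
    simp
  have h2 : polyDelta (descPochhammer ℝ (m + 1)) = ((m : ℝ[X]) + 1) * descPochhammer ℝ m := by
    rw [polyDelta, h1, descPochhammer_succ_right]
    ring
  rw [bb, polyDelta, smul_comp, ← smul_sub]
  rw [show (descPochhammer ℝ (m + 1)).comp (X + 1) - descPochhammer ℝ (m + 1)
      = ((m : ℝ[X]) + 1) * descPochhammer ℝ m from by rw [h1, descPochhammer_succ_right]; ring]
  rw [bb]
  rw [smul_eq_C_mul, smul_eq_C_mul, show ((m : ℝ[X]) + 1) = C ((m:ℝ)+1) by simp,
    ← mul_assoc, ← C_mul]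
  congr 1
  rw [Nat.factorial_succ]
  have h0 : (m.factorial : ℝ) ≠ 0 := Nat.cast_ne_zero.mpr m.factorial_ne_zero
  field_simp
  congr 1
  push_cast
  field_simp

lemma polyDelta_smul (c : ℝ) (p : ℝ[X]) : polyDelta (c • p) = c • polyDelta p := by
  simp [polyDelta, smul_comp, smul_sub]

lemma polyDelta_add (p q : ℝ[X]) : polyDelta (p + q) = polyDelta p + polyDelta q := by
  simp [polyDelta, add_comp]; ring

lemma polyDelta_bb_zero : polyDelta (bb 0) = 0 := by
  simp [bb_zero, polyDelta]

lemma stirling1_eq_zero : ∀ n j : ℕ, n < j → stirling1 n j = 0 := by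
  intro n
  induction n with
  | zero => intro j hj; cases j with
    | zero => omega
    | succ j => rfl
  | succ n ih =>
    intro j hj
    cases j with
    | zero => omega
    | succ j =>
      show n * stirling1 n (j+1) + stirling1 n j = 0
      rw [ih (j+1) (by omega), ih j (by omega)]
      simp

lemma coeff_descPochhammer : ∀ n j : ℕ,
    (descPochhammer ℝ n).coeff j = (-1) ^ (n - j) * stirling1 n j := by
  intro n
  induction n with
  | zero =>
    intro j
    cases j with
    | zero => simp [stirling1]
    | succ j => simp [stirling1, coeff_one, Nat.succ_ne_zero]
  | succ n ih =>
    intro j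
    have hC : ((n : ℝ[X])) = C (n : ℝ) := by simp
    rw [descPochhammer_succ_right, hC]
    cases j with
    | zero =>
      rw [mul_coeff_zero]
      have : (X - C (n:ℝ)).coeff 0 = -(n:ℝ) := by simp
      rw [this, ih 0]
      show _ = _ * (stirling1 (n+1) 0 : ℝ)
      cases n with
      | zero => simp [stirling1]
      | succ n => simp [stirling1_eq_zero, stirling1]
    | succ j =>
      rw [coeff_mul_X_sub_C, ih j, ih (j+1)]
      show _ = (-1:ℝ) ^ (n + 1 - (j+1)) * ((n * stirling1 n (j+1) + stirling1 n j : ℕ) : ℝ)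
      have hs : n + 1 - (j + 1) = n - j := by omega
      rw [hs]
      by_cases hj : j < n
      · have h1 : n - (j+1) + 1 = n - j := by omega
        rw [← h1, pow_succ]
        push_cast
        ring
      · have h2 : stirling1 n (j+1) = 0 := stirling1_eq_zero n (j+1) (by omega)
        rw [h2]
        push_cast [h2]
        ring

/-- formal integral over [0,1] -/
noncomputable def II : Polynomial ℝ →ₗ[ℝ] ℝ where
  toFun p := p.sum fun j a => a / (j + 1)
  map_add' p q := Polynomial.sum_add_index p q _ (fun n => zero_div _)
    (fun n a b => add_div a b _)
  map_smul' c p := by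
    simp only [RingHom.id_apply]
    rw [Polynomial.sum_smul_index p c (fun n a => a / (n + 1)) (fun i => zero_div _)]
    simp only [mul_div_assoc, Polynomial.sum, Finset.mul_sum, smul_eq_mul]

lemma II_monomial (j : ℕ) (a : ℝ) : II (monomial j a) = a / (j + 1) := by
  rw [show II (monomial j a) = (monomial j a).sum (fun j a => a / (j + 1)) from rfl,
    Polynomial.sum_monomial_index a (fun j a => a / (j + 1)) (zero_div _)]

lemma II_derivative (q : Polynomial ℝ) : II (derivative q) = q.eval 1 - q.eval 0 := by
  induction q using Polynomial.induction_on' with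
  | add p q hp hq => simp [hp, hq]; ring
  | monomial n a =>
    rw [derivative_monomial, II_monomial]
    cases n with
    | zero => simp
    | succ n =>
      simp only [Nat.add_sub_cancel, eval_monomial]
      push_cast
      rw [div_eq_iff (by positivity)]
      ring

lemma II_descPochhammer (l : ℕ) : II (descPochhammer ℝ l)
    = ∑ j ∈ Finset.range (l + 1), (stirling1 l j : ℝ) * (-1) ^ (l - j) / ((j : ℝ) + 1) := by
  rw [show II (descPochhammer ℝ l) = (descPochhammer ℝ l).sum (fun j a => a / (j + 1)) from rfl]
  rw [Polynomial.sum_over_range' (descPochhammer ℝ l) (f := fun j a => a / (j + 1)) (fun n => zero_div _) (l + 1)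
    (by rw [descPochhammer_natDegree]; omega)]
  refine Finset.sum_congr rfl fun j hj => ?_
  rw [coeff_descPochhammer]
  ring

lemma II_bb (l : ℕ) : II (bb l) = gregory l := by
  rw [bb, map_smul, II_descPochhammer, gregory, smul_eq_mul]

lemma eval_bb_zero (u : ℕ) (hu : 1 ≤ u) : (bb u).eval 0 = 0 := by
  simp [bb, descPochhammer_eval_zero, Nat.one_le_iff_ne_zero.mp hu]

lemma eval_bb_one (u : ℕ) (hu : 1 ≤ u) : (bb u).eval 1 = if u = 1 then 1 else 0 := by
  cases u with
  | zero => omega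
  | succ v =>
    rw [bb, descPochhammer_succ_left]
    rw [eval_smul, eval_mul, eval_comp, eval_X, eval_sub, eval_X, eval_one, one_mul,
      sub_self, descPochhammer_eval_zero]
    cases v with
    | zero => norm_num
    | succ v => simp [Nat.succ_ne_zero]

lemma bb_mul_X_sub (j : ℕ) (c : ℝ) :
    bb j * (X - Polynomial.C c) = ((j : ℝ) + 1) • bb (j + 1) + ((j : ℝ) - c) • bb j := by
  have hfac : ((j : ℝ) + 1) * (1 / ((j+1).factorial : ℝ)) = 1 / (j.factorial : ℝ) := by
    rw [Nat.factorial_succ]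
    have h0 : (j.factorial : ℝ) ≠ 0 := Nat.cast_ne_zero.mpr j.factorial_ne_zero
    push_cast
    field_simp
  have hdp : descPochhammer ℝ (j+1) = descPochhammer ℝ j * (X - C (j : ℝ)) := by
    rw [descPochhammer_succ_right]
    norm_num
  simp only [bb]
  rw [smul_mul_assoc, smul_smul, hfac, hdp, smul_smul]
  rw [smul_eq_C_mul, smul_eq_C_mul, smul_eq_C_mul, map_mul, map_sub]
  ring

lemma ee_scalar_id (m j : ℕ) (hj : j ≤ m) :
    ee (m+1-j) * (j:ℝ) + ee (m-j) * ((j:ℝ) - m) + (if j = m then (1:ℝ) else 0)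
      = ((m:ℝ)+1) * ee (m+1-j) := by
  rcases eq_or_lt_of_le hj with h | h
  · subst h
    norm_num [ee]
  · obtain ⟨d, hd⟩ : ∃ d, m - j = d + 1 := ⟨m - j - 1, by omega⟩
    have h1 : m + 1 - j = d + 2 := by omega
    have hm : (m:ℝ) = (j:ℝ) + (d:ℝ) + 1 := by
      have : m = j + (d + 1) := by omega
      rw [this]; push_cast; ring
    rw [if_neg (by omega), h1, hd, hm, ee, ee]
    have hd1 : ((d:ℝ) + 1) ≠ 0 := by positivity
    have hd2 : ((d:ℝ) + 2) ≠ 0 := by positivity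
    push_cast
    rw [pow_succ, pow_succ, pow_succ]
    field_simp
    ring

lemma deriv_bb : ∀ m, derivative (bb m) = FF m := by
  intro m
  induction m with
  | zero => simp [bb_zero, FF]
  | succ m ih =>
    have hb : ((m:ℝ)+1) • bb (m+1) = bb m * (X - C (m:ℝ)) - ((m:ℝ) - m) • bb m := by
      rw [bb_mul_X_sub m (m:ℝ)]; ring_nf
    have hb' : ((m:ℝ)+1) • bb (m+1) = bb m * (X - C (m:ℝ)) := by
      rw [hb]; simp
    have hder : ((m:ℝ)+1) • derivative (bb (m+1)) = FF m * (X - C (m:ℝ)) + bb m := by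
      rw [← map_smul, hb', derivative_mul, ih, derivative_sub, derivative_X, derivative_C]
      ring_nf
    -- compute RHS as a sum over range (m+1)
    have hS : FF m * (X - C (m:ℝ)) + bb m
        = ∑ j ∈ Finset.range (m+1),
            (ee (m+1-j) * (j:ℝ) + ee (m-j) * ((j:ℝ) - m) + (if j = m then (1:ℝ) else 0)) • bb j := by
      have e1 : FF m * (X - C (m:ℝ))
          = ∑ j ∈ Finset.range m,
              ((ee (m-j) * ((j:ℝ)+1)) • bb (j+1) + (ee (m-j) * ((j:ℝ) - m)) • bb j) := by
        rw [FF, Finset.sum_mul]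
        refine Finset.sum_congr rfl fun j hj => ?_
        rw [smul_mul_assoc, bb_mul_X_sub, smul_add, smul_smul, smul_smul]
      rw [e1, Finset.sum_add_distrib]
      have e2 : ∑ j ∈ Finset.range m, (ee (m-j) * ((j:ℝ)+1)) • bb (j+1)
          = ∑ j ∈ Finset.range (m+1), (ee (m+1-j) * (j:ℝ)) • bb j := by
        rw [Finset.sum_range_succ' (fun j => (ee (m+1-j) * (j:ℝ)) • bb j) m]
        simp only [Nat.cast_zero, mul_zero, zero_smul, add_zero]
        refine Finset.sum_congr rfl fun j hj => ?_
        have : m + 1 - (j + 1) = m - j := by omega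
        rw [this]
        push_cast
        ring_nf
      have e3 : ∑ j ∈ Finset.range m, (ee (m-j) * ((j:ℝ) - m)) • bb j
          = ∑ j ∈ Finset.range (m+1), (ee (m-j) * ((j:ℝ) - m)) • bb j := by
        rw [Finset.sum_range_succ]
        simp
      have e4 : bb m = ∑ j ∈ Finset.range (m+1), (if j = m then (1:ℝ) else 0) • bb j := by
        rw [show (∑ j ∈ Finset.range (m+1), (if j = m then (1:ℝ) else 0) • bb j)
            = ∑ j ∈ Finset.range (m+1), (if j = m then bb j else 0) from
          Finset.sum_congr rfl fun j _ => by split <;> simp]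
        rw [Finset.sum_ite_eq' (Finset.range (m+1)) m bb, if_pos (by simp)]
      rw [e2, e3]
      conv_lhs => rw [e4]
      rw [← Finset.sum_add_distrib, ← Finset.sum_add_distrib]
      refine Finset.sum_congr rfl fun j hj => ?_
      rw [add_smul, add_smul]
    have hFF : ((m:ℝ)+1) • FF (m+1)
        = ∑ j ∈ Finset.range (m+1), (((m:ℝ)+1) * ee (m+1-j)) • bb j := by
      rw [FF, Finset.smul_sum]
      refine Finset.sum_congr rfl fun j hj => ?_
      rw [smul_smul]
    have key : ((m:ℝ)+1) • derivative (bb (m+1)) = ((m:ℝ)+1) • FF (m+1) := by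
      rw [hder, hS, hFF]
      refine Finset.sum_congr rfl fun j hj => ?_
      rw [ee_scalar_id m j (by simp at hj; omega)]
    have hne : ((m:ℝ)+1) ≠ 0 := by positivity
    exact smul_right_injective _ hne key

lemma gregory_rec (u : ℕ) :
    (∑ ℓ ∈ Finset.range u, gregory ℓ * ee (u - ℓ)) = if u = 1 then 1 else 0 := by
  cases u with
  | zero => simp
  | succ v =>
    have h : ∑ ℓ ∈ Finset.range (v+1), gregory ℓ * ee (v+1-ℓ) = II (FF (v+1)) := by
      rw [FF, map_sum]
      refine Finset.sum_congr rfl fun ℓ _ => ?_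
      rw [map_smul, II_bb, smul_eq_mul]
      ring
    rw [h, ← deriv_bb, II_derivative, eval_bb_one _ (by omega), eval_bb_zero _ (by omega)]
    simp

lemma polyDelta_sum {α : Type*} (s : Finset α) (f : α → Polynomial ℝ) :
    polyDelta (∑ i ∈ s, f i) = ∑ i ∈ s, polyDelta (f i) := by
  classical
  induction s using Finset.cons_induction with
  | empty => simp [polyDelta]
  | cons a s ha ih => rw [Finset.sum_cons, polyDelta_add, ih, Finset.sum_cons]

lemma polyDelta_FF (u : ℕ) : polyDelta (FF u) = FF (u - 1) := by
  cases u with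
  | zero => simp [FF, polyDelta]
  | succ v =>
    rw [FF, Finset.sum_range_succ' (fun t => ee (v+1-t) • bb t) v, polyDelta_add,
      polyDelta_sum, polyDelta_smul, polyDelta_bb_zero, smul_zero, add_zero]
    rw [show v + 1 - 1 = v from rfl, FF]
    refine Finset.sum_congr rfl fun t ht => ?_
    rw [polyDelta_smul, polyDelta_bb_succ]
    congr 2
    omega

lemma polyDelta_iter_FF (l u : ℕ) : polyDelta^[l] (FF u) = FF (u - l) := by
  induction l generalizing u with
  | zero => simp
  | succ l ih =>
    rw [Function.iterate_succ_apply, polyDelta_FF, ih]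
    congr 1
    omega

lemma key_identity (s N : ℕ) (hN : s ≤ N) :
    polyDelta (bb s) = ∑ ℓ ∈ Finset.range N, gregory ℓ • FF (s - ℓ) := by
  have step1 : ∀ ℓ, gregory ℓ • FF (s - ℓ)
      = ∑ t ∈ Finset.range s, (gregory ℓ * ee (s - t - ℓ)) • bb t := by
    intro ℓ
    rw [FF, Finset.smul_sum]
    rw [show (∑ t ∈ Finset.range (s-ℓ), gregory ℓ • ee (s - ℓ - t) • bb t)
        = ∑ t ∈ Finset.range (s-ℓ), (gregory ℓ * ee (s - t - ℓ)) • bb t from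
      Finset.sum_congr rfl fun t ht => by
        rw [smul_smul, show s - ℓ - t = s - t - ℓ from by omega]]
    refine Finset.sum_subset (Finset.range_subset_range.mpr (Nat.sub_le s ℓ)) fun t ht ht' => ?_
    have : s - t - ℓ = 0 := by
      simp only [Finset.mem_range] at ht ht'
      omega
    rw [this, ee_zero, mul_zero, zero_smul]
  rw [show (∑ ℓ ∈ Finset.range N, gregory ℓ • FF (s - ℓ))
      = ∑ ℓ ∈ Finset.range N, ∑ t ∈ Finset.range s, (gregory ℓ * ee (s - t - ℓ)) • bb t from
    Finset.sum_congr rfl fun ℓ _ => step1 ℓ]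
  rw [Finset.sum_comm]
  rw [show (∑ t ∈ Finset.range s, ∑ ℓ ∈ Finset.range N, (gregory ℓ * ee (s - t - ℓ)) • bb t)
      = ∑ t ∈ Finset.range s, (∑ ℓ ∈ Finset.range N, gregory ℓ * ee (s - t - ℓ)) • bb t from
    Finset.sum_congr rfl fun t _ => by rw [Finset.sum_smul]]
  have inner : ∀ t, t < s → (∑ ℓ ∈ Finset.range N, gregory ℓ * ee (s - t - ℓ))
      = if s - t = 1 then (1:ℝ) else 0 := by
    intro t ht
    rw [← Finset.sum_subset (Finset.range_subset_range.mpr (le_trans (Nat.sub_le s t) hN))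
      (fun ℓ hl hl' => ?_), gregory_rec]
    have : s - t - ℓ = 0 := by
      simp only [Finset.mem_range] at hl hl'
      omega
    rw [this, ee_zero, mul_zero]
  rw [show (∑ t ∈ Finset.range s, (∑ ℓ ∈ Finset.range N, gregory ℓ * ee (s - t - ℓ)) • bb t)
      = ∑ t ∈ Finset.range s, (if s - t = 1 then (1:ℝ) else 0) • bb t from
    Finset.sum_congr rfl fun t ht => by rw [inner t (Finset.mem_range.mp ht)]]
  cases s with
  | zero => simp [polyDelta_bb_zero]
  | succ v =>
    rw [polyDelta_bb_succ]
    rw [show (∑ t ∈ Finset.range (v+1), (if v + 1 - t = 1 then (1:ℝ) else 0) • bb t)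
        = ∑ t ∈ Finset.range (v+1), (if t = v then bb t else 0) from
      Finset.sum_congr rfl fun t ht => by
        have ht' : t < v + 1 := Finset.mem_range.mp ht
        by_cases h : t = v
        · rw [if_pos (by omega), if_pos h, one_smul]
        · rw [if_neg (by omega), if_neg h, zero_smul]]
    rw [Finset.sum_ite_eq' (Finset.range (v+1)) v bb, if_pos (Finset.self_mem_range_succ v)]

lemma polyDelta_zero : polyDelta 0 = 0 := by simp [polyDelta]

lemma polyDelta_iter_zero (l : ℕ) : polyDelta^[l] 0 = 0 := by
  induction l with
  | zero => rfl
  | succ l ih => rw [Function.iterate_succ_apply, polyDelta_zero, ih]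

lemma polyDelta_iter_add (l : ℕ) (p q : Polynomial ℝ) :
    polyDelta^[l] (p + q) = polyDelta^[l] p + polyDelta^[l] q := by
  induction l generalizing p q with
  | zero => rfl
  | succ l ih => rw [Function.iterate_succ_apply, polyDelta_add, ih,
      Function.iterate_succ_apply, Function.iterate_succ_apply]

lemma polyDelta_iter_smul (l : ℕ) (c : ℝ) (p : Polynomial ℝ) :
    polyDelta^[l] (c • p) = c • polyDelta^[l] p := by
  induction l generalizing p with
  | zero => rfl
  | succ l ih => rw [Function.iterate_succ_apply, polyDelta_smul, ih,
      Function.iterate_succ_apply]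

lemma bb_mem_degreeLE (t k : ℕ) (ht : t ≤ k) : bb t ∈ Polynomial.degreeLE ℝ (k : ℕ) := by
  rw [Polynomial.mem_degreeLE]
  refine le_trans (Polynomial.degree_le_natDegree) ?_
  exact_mod_cast le_trans (natDegree_bb t) ht

lemma FF_mem_degreeLE (u k : ℕ) (hu : u ≤ k + 1) : FF u ∈ Polynomial.degreeLE ℝ (k : ℕ) := by
  rw [FF]
  refine Submodule.sum_mem _ fun t ht => Submodule.smul_mem _ _ ?_
  exact bb_mem_degreeLE t k (by simp only [Finset.mem_range] at ht; omega)

lemma phi_bb_mem (n k s : ℕ) (hs : s ≤ k + n + 1) :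
    polyDelta (bb s) - ∑ ℓ ∈ Finset.range n, gregory ℓ • polyDelta^[ℓ] (derivative (bb s))
      ∈ Polynomial.degreeLE ℝ (k : ℕ) := by
  have hiter : ∀ ℓ, polyDelta^[ℓ] (derivative (bb s)) = FF (s - ℓ) := by
    intro ℓ
    rw [deriv_bb, polyDelta_iter_FF]
  have hkey := key_identity s (n + s) (by omega)
  have hsplit : ∑ ℓ ∈ Finset.range (n + s), gregory ℓ • FF (s - ℓ)
      - ∑ ℓ ∈ Finset.range n, gregory ℓ • FF (s - ℓ)
      = ∑ ℓ ∈ Finset.Ico n (n + s), gregory ℓ • FF (s - ℓ) := by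
    rw [Finset.sum_Ico_eq_sub _ (by omega : n ≤ n + s)]
  rw [show (∑ ℓ ∈ Finset.range n, gregory ℓ • polyDelta^[ℓ] (derivative (bb s)))
      = ∑ ℓ ∈ Finset.range n, gregory ℓ • FF (s - ℓ) from
    Finset.sum_congr rfl fun ℓ _ => by rw [hiter]]
  rw [hkey, hsplit]
  refine Submodule.sum_mem _ fun ℓ hl => Submodule.smul_mem _ _ ?_
  refine FF_mem_degreeLE _ _ ?_
  simp only [Finset.mem_Ico] at hl
  omega

lemma mem_span_bb : ∀ d (p : Polynomial ℝ), p.natDegree ≤ d →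
    p ∈ Submodule.span ℝ (bb '' Set.Iic d) := by
  intro d
  induction d with
  | zero =>
    intro p hp
    rw [Polynomial.eq_C_of_natDegree_le_zero hp,
      show C (p.coeff 0) = p.coeff 0 • bb 0 by rw [bb_zero, Polynomial.smul_eq_C_mul, mul_one]]
    exact Submodule.smul_mem _ _ (Submodule.subset_span ⟨0, Set.mem_Iic.mpr (le_refl 0), rfl⟩)
  | succ d ih =>
    intro p hp
    set c := p.coeff (d+1) * (((d+1).factorial : ℕ) : ℝ) with hc
    have hcoeff : (bb (d+1)).coeff (d+1) = 1 / (((d+1).factorial : ℕ) : ℝ) := by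
      rw [bb, Polynomial.coeff_smul]
      have h1 : (descPochhammer ℝ (d+1)).coeff (d+1) = 1 := by
        have := (monic_descPochhammer ℝ (d+1)).coeff_natDegree
        rwa [descPochhammer_natDegree] at this
      rw [h1]
      simp
    have hq : (p - c • bb (d+1)).natDegree ≤ d := by
      refine Polynomial.natDegree_le_iff_coeff_eq_zero.mpr fun j hj => ?_
      rw [Polynomial.coeff_sub, Polynomial.coeff_smul]
      rcases eq_or_lt_of_le (Nat.succ_le_of_lt hj) with h | h
      · rw [← h, hcoeff, hc, smul_eq_mul]
        have hfac : (((d+1).factorial : ℕ) : ℝ) ≠ 0 :=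
          Nat.cast_ne_zero.mpr (d+1).factorial_ne_zero
        field_simp
        simp
      · rw [Polynomial.coeff_eq_zero_of_natDegree_lt (lt_of_le_of_lt hp h),
          Polynomial.coeff_eq_zero_of_natDegree_lt (lt_of_le_of_lt (natDegree_bb (d+1)) h)]
        simp
    have hsub : bb '' Set.Iic d ⊆ bb '' Set.Iic (d + 1) :=
      Set.image_mono (Set.Iic_subset_Iic.mpr (by omega))
    have h1 : p = (p - c • bb (d+1)) + c • bb (d+1) := by ring
    rw [h1]
    exact Submodule.add_mem _ (Submodule.span_mono hsub (ih _ hq))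
      (Submodule.smul_mem _ _ (Submodule.subset_span ⟨d+1, Set.mem_Iic.mpr (le_refl _), rfl⟩))

theorem sigma_gregory_degree (τ : ℕ → Polynomial ℝ) (hτ : ∀ k, (τ k).natDegree ≤ k)
    (n k : ℕ) (hn : 1 ≤ n) :
    (polyDelta (τ (k + n + 1))
      - ∑ ℓ ∈ Finset.range n,
          gregory ℓ • polyDelta^[ℓ] (Polynomial.derivative (τ (k + n + 1)))).natDegree
      ≤ k := by
  set P : Polynomial ℝ → Prop := fun p =>
    polyDelta p - ∑ ℓ ∈ Finset.range n, gregory ℓ • polyDelta^[ℓ] (derivative p)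
      ∈ Polynomial.degreeLE ℝ (k : ℕ) with hP
  have hmain : P (τ (k + n + 1)) := by
    have hspan := mem_span_bb (k + n + 1) (τ (k + n + 1)) (hτ _)
    refine Submodule.span_induction ?_ ?_ ?_ ?_ hspan
    · rintro x ⟨s, hs, rfl⟩
      exact phi_bb_mem n k s (Set.mem_Iic.mp hs)
    · simp only [hP, polyDelta_zero, map_zero, polyDelta_iter_zero, smul_zero,
        Finset.sum_const_zero, sub_zero]
      exact Submodule.zero_mem _
    · intro p q hp hq hPp hPq
      simp only [hP, polyDelta_add, derivative_add, polyDelta_iter_add, smul_add,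
        Finset.sum_add_distrib] at *
      have := Submodule.add_mem _ hPp hPq
      convert this using 1
      abel
    · intro c p hp hPp
      simp only [hP, polyDelta_smul, derivative_smul, polyDelta_iter_smul] at *
      have : ∑ ℓ ∈ Finset.range n, gregory ℓ • c • polyDelta^[ℓ] (derivative p)
          = c • ∑ ℓ ∈ Finset.range n, gregory ℓ • polyDelta^[ℓ] (derivative p) := by
        rw [Finset.smul_sum]
        exact Finset.sum_congr rfl fun ℓ _ => smul_comm _ _ _
      rw [this, ← smul_sub]
      exact Submodule.smul_mem _ _ hPp
  rw [hP] at hmain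
  rw [Polynomial.mem_degreeLE] at hmain
  exact Polynomial.natDegree_le_iff_degree_le.mpr hmain
end
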